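/- Assume q is 1-periodic (q(x+1) = q(x) for all x) and let λ ∈ ℂ with λ ≠ 0 satisfy c'(1,λ) = 0, s(1,λ) = 0, c'(1/2,λ) = −λ²·s(1/2,λ), c'(3/2,λ) = −λ²·s(3/2,λ), and s(1/2,λ) ≠ 0. Then s'(1,λ) = c(1,λ), and consequently c(1,λ) = 1 or c(1,λ) = −1 and Δ(λ)² = 4. -/

import Mathlib

/-- `IsSol q μ y yd` says that `y : ℝ → ℂ` is a (twice continuously differentiable)
solution of `−y'' + q·y = μ·y` on all of `ℝ`, with first derivative `yd`. -/
def IsSol (q : ℝ → ℂ) (μ : ℂ) (y yd : ℝ → ℂ) : Prop :=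
  (∀ x : ℝ, HasDerivAt y (yd x) x) ∧
  (∀ x : ℝ, HasDerivAt yd (q x * y x - μ * y x) x)

/-!
Since `q` is 1-periodic, `x ↦ y (x + 1)` solves the equation whenever `y` does, so comparing initial
data gives the monodromy relations `c(x+1) = c(1) c(x)` and `s(x+1) = s'(1) s(x)` (using
`c'(1) = 0 = s(1)`). At `x = 1/2` the two hypotheses at `1/2` and `3/2` then force
`λ² s(1/2) (s'(1) - c(1)) = 0`, hence `s'(1) = c(1)`, and the Wronskian identity
`c(1) s'(1) = 1` gives `c(1)² = 1`.
-/

namespace IsSol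

variable {q : ℝ → ℂ} {μ : ℂ} {c cd s sd y yd z zd : ℝ → ℂ}

theorem wronskian_eq (hy : IsSol q μ y yd) (hz : IsSol q μ z zd) (x : ℝ) :
    y x * zd x - yd x * z x = y 0 * zd 0 - yd 0 * z 0 := by
  have hW : ∀ t, HasDerivAt (fun u => y u * zd u - yd u * z u) 0 t := fun t =>
    (((hy.1 t).mul (hz.2 t)).sub ((hy.2 t).mul (hz.1 t))).congr_deriv (by ring)
  exact is_const_of_deriv_eq_zero (fun t => (hW t).differentiableAt) (fun t => (hW t).deriv) x 0

theorem eq_initial_combination (hc : IsSol q μ c cd) (hs : IsSol q μ s sd)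
    (hc0 : c 0 = 1) (hcd0 : cd 0 = 0) (hs0 : s 0 = 0) (hsd0 : sd 0 = 1)
    (hy : IsSol q μ y yd) (x : ℝ) :
    y x = y 0 * c x + yd 0 * s x ∧ yd x = y 0 * cd x + yd 0 * sd x := by
  have hcs := wronskian_eq hc hs x
  have hyc := wronskian_eq hy hc x
  have hys := wronskian_eq hy hs x
  simp only [hc0, hcd0, hs0, hsd0] at hcs hyc hys
  constructor
  · linear_combination c x * hys - s x * hyc - y x * hcs
  · linear_combination cd x * hys - sd x * hyc - yd x * hcs

theorem comp_add_one (hy : IsSol q μ y yd) (hper : ∀ x, q (x + 1) = q x) :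
    IsSol q μ (fun x => y (x + 1)) (fun x => yd (x + 1)) :=
  ⟨fun x => (hy.1 (x + 1)).comp_add_const x 1, fun x => by
    simpa [hper x] using (hy.2 (x + 1)).comp_add_const x 1⟩

theorem shift_eq (hc : IsSol q μ c cd) (hs : IsSol q μ s sd)
    (hc0 : c 0 = 1) (hcd0 : cd 0 = 0) (hs0 : s 0 = 0) (hsd0 : sd 0 = 1)
    (hper : ∀ x, q (x + 1) = q x) (hy : IsSol q μ y yd) (x : ℝ) :
    y (x + 1) = y 1 * c x + yd 1 * s x ∧ yd (x + 1) = y 1 * cd x + yd 1 * sd x := by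
  simpa using eq_initial_combination hc hs hc0 hcd0 hs0 hsd0 (hy.comp_add_one hper) x

end IsSol

theorem stmt16_general (q : ℝ → ℂ)
    (c s cd sd : ℂ → ℝ → ℂ)
    (hc : ∀ l : ℂ, IsSol q (l ^ 2) (c l) (cd l))
    (hs : ∀ l : ℂ, IsSol q (l ^ 2) (s l) (sd l))
    (hc0 : ∀ l : ℂ, c l 0 = 1) (hcd0 : ∀ l : ℂ, cd l 0 = 0)
    (hs0 : ∀ l : ℂ, s l 0 = 0) (hsd0 : ∀ l : ℂ, sd l 0 = 1)
    (hper : ∀ x : ℝ, q (x + 1) = q x) (l : ℂ) (hl : l ≠ 0)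
    (h1 : cd l 1 = 0) (h2 : s l 1 = 0)
    (h3 : cd l (1/2) = -l ^ 2 * s l (1/2))
    (h4 : cd l (3/2) = -l ^ 2 * s l (3/2))
    (h5 : s l (1/2) ≠ 0) :
    sd l 1 = c l 1 ∧ (c l 1 = 1 ∨ c l 1 = -1) ∧ (c l 1 + sd l 1) ^ 2 = 4 := by
  have h32 : (1/2 : ℝ) + 1 = 3/2 := by norm_num
  obtain ⟨-, hcd32⟩ :=
    IsSol.shift_eq (hc l) (hs l) (hc0 l) (hcd0 l) (hs0 l) (hsd0 l) hper (hc l) (1/2)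
  obtain ⟨hs32, -⟩ :=
    IsSol.shift_eq (hc l) (hs l) (hc0 l) (hcd0 l) (hs0 l) (hsd0 l) hper (hs l) (1/2)
  rw [h32] at hcd32 hs32
  rw [h1, zero_mul, add_zero] at hcd32
  rw [h2, zero_mul, zero_add] at hs32
  have hsd_eq_c : sd l 1 = c l 1 := by
    refine mul_left_cancel₀ (mul_ne_zero (pow_ne_zero 2 hl) h5) ?_
    linear_combination h4 - hcd32 - c l 1 * h3 - l ^ 2 * hs32
  have hw : c l 1 * c l 1 = 1 := by
    simpa [hc0 l, hcd0 l, hs0 l, hsd0 l, h1, h2, hsd_eq_c] using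
      IsSol.wronskian_eq (hc l) (hs l) 1
  refine ⟨hsd_eq_c, mul_self_eq_one_iff.mp hw, ?_⟩
  rw [hsd_eq_c]
  linear_combination 4 * hw

/-- Case s(1/2,λ) ≠ 0 in the sufficiency proof, under condition (B) relations. -/
theorem stmt16 (q : ℝ → ℂ) (hq : Continuous q)
    (c s cd sd : ℂ → ℝ → ℂ)
    (hc : ∀ l : ℂ, IsSol q (l ^ 2) (c l) (cd l))
    (hs : ∀ l : ℂ, IsSol q (l ^ 2) (s l) (sd l))
    (hc0 : ∀ l : ℂ, c l 0 = 1) (hcd0 : ∀ l : ℂ, cd l 0 = 0)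
    (hs0 : ∀ l : ℂ, s l 0 = 0) (hsd0 : ∀ l : ℂ, sd l 0 = 1)
    (hper : ∀ x : ℝ, q (x + 1) = q x) (l : ℂ) (hl : l ≠ 0)
    (h1 : cd l 1 = 0) (h2 : s l 1 = 0)
    (h3 : cd l (1/2) = -l ^ 2 * s l (1/2))
    (h4 : cd l (3/2) = -l ^ 2 * s l (3/2))
    (h5 : s l (1/2) ≠ 0) :
    sd l 1 = c l 1 ∧ (c l 1 = 1 ∨ c l 1 = -1) ∧ (c l 1 + sd l 1) ^ 2 = 4 :=
  stmt16_general q c s cd sd hc hs hc0 hcd0 hs0 hsd0 hper l hl h1 h2 h3 h4 h5
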